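/- arXiv:2110.08909 — 2 statements merged into one kernel-verified Lean document; each statement's English description precedes it below -/
import Mathlib

section
/- Let K be a compact strictly convex body in ℝ² symmetric about the origin (K = −K), with boundary γ. If a parallelogram is inscribed in γ (all four vertices on γ), then its center is the origin. -/
/-!
Write the parallelogram as `m ± u`, `m ± w` with centre `m`, and `m = α • u + β • w`. After
exchanging `u, w` and flipping signs we may assume `0 < α` and `|β| ≤ α`. Then `m - u` is a
proper convex combination of `-(m + u)`, which lies in `K` by symmetry, and of the point
`m + (β / α) • w` of the diagonal `[m - w, m + w]`; these two points differ unless `m = 0`, so by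
strict convexity the vertex `m - u` would be interior.
-/

open Module Submodule

section

variable {E : Type*} [AddCommGroup E] [Module ℝ E] {K : Set E}

theorem mem_span_sub_of_not_collinear [FiniteDimensional ℝ E] (hE : finrank ℝ E = 2)
    {A B D : E} (h : ¬ Collinear ℝ {A, B, D}) (x : E) : x ∈ span ℝ {B - A, D - A} := by
  have htop := (affineIndependent_iff_not_collinear_set.2 h).vectorSpan_eq_top_of_card_eq_finrank_add_one
    (by simp [hE])
  rw [Matrix.range_cons, Matrix.range_cons_cons_empty, ← Set.insert_eq,
    vectorSpan_eq_span_vsub_set_right ℝ (Set.mem_insert A _)] at htop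
  simp only [Set.image_insert_eq, Set.image_singleton, vsub_eq_sub, sub_self,
    span_insert_zero] at htop
  exact htop ▸ mem_top

theorem Convex.add_smul_mem_of_abs_le (hK : Convex ℝ K) {m w : E} (h₁ : m + w ∈ K)
    (h₂ : m - w ∈ K) {t : ℝ} (ht : |t| ≤ 1) : m + t • w ∈ K := by
  obtain ⟨ht₁, ht₂⟩ := abs_le.1 ht
  convert hK h₁ h₂ (a := (1 + t) / 2) (b := (1 - t) / 2) (by linarith) (by linarith) (by ring)
    using 1
  module

variable [TopologicalSpace E]

theorem StrictConvex.parallelogram_vertex_mem_interior (hK : StrictConvex ℝ K) {m u w : E}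
    {α t : ℝ} (hα : 0 < α) (ht : |t| ≤ 1) (hm : m = α • (u + t • w)) (hm0 : m ≠ 0)
    (hA : -(m + u) ∈ K) (hB : m + w ∈ K) (hD : m - w ∈ K) : m - u ∈ interior K := by
  have hy : m + t • w ∈ K := hK.convex.add_smul_mem_of_abs_le hB hD ht
  have hne : -(m + u) ≠ m + t • w := by
    intro h
    have : (2 * α + 1) • (u + t • w) = 0 := by
      subst hm; linear_combination (norm := module) -h
    rw [hm, (smul_eq_zero.1 this).resolve_left (by positivity), smul_zero] at hm0
    exact hm0 rfl
  have hsplit :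
      (1 / (2 * α + 1)) • (-(m + u)) + (2 * α / (2 * α + 1)) • (m + t • w) = m - u := by
    subst hm
    match_scalars <;> field_simp <;> ring
  exact hsplit ▸ hK hA hy hne (by positivity) (by positivity) (by field_simp; ring)

theorem StrictConvex.center_eq_zero_of_parallelogram_frontier (hK : StrictConvex ℝ K)
    (hKc : IsClosed K) (hsymm : K = -K) {m u w : E} (hA : m + u ∈ frontier K)
    (hB : m + w ∈ frontier K) (hC : m - u ∈ frontier K) (hD : m - w ∈ frontier K) {α β : ℝ}
    (hm : m = α • u + β • w) : m = 0 := by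
  by_contra hm0
  wlog hβα : |β| ≤ |α| generalizing u w α β
  · exact this hB hA hD hC (by rw [hm, add_comm]) (le_of_not_ge hβα)
  wlog hα : 0 < α generalizing u α
  · refine this (u := -u) (α := -α) (by rwa [← sub_eq_add_neg]) (by rwa [sub_neg_eq_add])
      (by rw [hm, neg_smul_neg]) (by rwa [abs_neg]) ?_
    have hα0 : α ≠ 0 := by
      rintro rfl
      rw [abs_zero, abs_nonpos_iff] at hβα
      simp [hm, hβα] at hm0
    exact neg_pos.2 (lt_of_le_of_ne (not_lt.1 hα) hα0)
  have hneg : ∀ x ∈ K, -x ∈ K := fun x hx => by rw [hsymm]; exact Set.neg_mem_neg.2 hx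
  have hfr : frontier K ⊆ K := hKc.frontier_subset
  refine hC.2 (hK.parallelogram_vertex_mem_interior hα (t := β / α) ?_ ?_ hm0
    (hneg _ (hfr hA)) (hfr hB) (hfr hD))
  · rw [abs_div, div_le_one (abs_pos.2 hα.ne')]; exact hβα
  · rw [hm, smul_add, smul_smul, mul_div_cancel₀ _ hα.ne']

end

theorem inscribed_parallelogram_centered_general (K : Set (ℝ × ℝ))
    (hK : IsCompact K) (hKconv : StrictConvex ℝ K)
    (hsymm : K = -K)
    (A B C D : ℝ × ℝ)
    (hA : A ∈ frontier K) (hB : B ∈ frontier K) (hC : C ∈ frontier K)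
    (hD : D ∈ frontier K)
    (hpar : B - A = C - D) (hnd : ¬ Collinear ℝ ({A, B, D} : Set (ℝ × ℝ))) :
    (A + C) / 2 = 0 ∧ (B + D) / 2 = 0 := by
  obtain ⟨m, u, w, rfl, rfl, rfl, rfl⟩ :
      ∃ m u w : ℝ × ℝ, A = m + u ∧ B = m + w ∧ C = m - u ∧ D = m - w :=
    ⟨(2 : ℝ)⁻¹ • (A + C), (2 : ℝ)⁻¹ • (A - C), (2 : ℝ)⁻¹ • (B - D),
      by module, by linear_combination (norm := module) (2 : ℝ)⁻¹ • hpar, by module,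
      by linear_combination (norm := module) (2 : ℝ)⁻¹ • hpar⟩
  obtain ⟨a, b, hab⟩ := mem_span_pair.1 (mem_span_sub_of_not_collinear (by simp) hnd m)
  have hm : m = -(a + b) • u + (a - b) • w := by rw [← hab]; module
  obtain rfl := hKconv.center_eq_zero_of_parallelogram_frontier hK.isClosed hsymm hA hB hC hD hm
  simp [Prod.ext_iff]

theorem inscribed_parallelogram_centered (K : Set (ℝ × ℝ))
    (hK : IsCompact K) (hKconv : StrictConvex ℝ K) (hKint : (interior K).Nonempty)
    (hsymm : K = -K)
    (A B C D : ℝ × ℝ)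
    (hA : A ∈ frontier K) (hB : B ∈ frontier K) (hC : C ∈ frontier K)
    (hD : D ∈ frontier K)
    (hpar : B - A = C - D) (hnd : ¬ Collinear ℝ ({A, B, D} : Set (ℝ × ℝ))) :
    (A + C) / 2 = 0 ∧ (B + D) / 2 = 0 :=
  inscribed_parallelogram_centered_general K hK hKconv hsymm A B C D hA hB hC hD hpar hnd
end

section
/- Let γ be a strictly convex closed curve symmetric about the origin, and suppose that for every direction u, the curve γ is symmetric with respect to some line through the origin together with the direction u in the sense that γ has an affine line of symmetry in every direction (for each direction u there is an affine map fixing a line pointwise, mapping each chord of direction u to itself reversed, and preserving γ). Then γ is an ellipse. -/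
open Set MeasureTheory
noncomputable section

def lmk (p q s t : ℝ) : (ℝ×ℝ) →ₗ[ℝ] (ℝ×ℝ) where
  toFun x := (p*x.1 + q*x.2, s*x.1 + t*x.2)
  map_add' x y := by ext <;> simp <;> ring
  map_smul' c x := by ext <;> simp <;> ring

@[simp] lemma lmk_apply (p q s t : ℝ) (x : ℝ×ℝ) :
    lmk p q s t x = (p*x.1 + q*x.2, s*x.1 + t*x.2) := rfl

lemma lin_eval (f : (ℝ×ℝ) →ₗ[ℝ] (ℝ×ℝ)) (x : ℝ×ℝ) :
    f x = x.1 • f (1,0) + x.2 • f (0,1) := by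
  have h : x = x.1 • ((1:ℝ),(0:ℝ)) + x.2 • ((0:ℝ),(1:ℝ)) := by ext <;> simp
  rw [← _root_.map_smul, ← _root_.map_smul, ← map_add, ← h]

lemma lin_ext {f g : (ℝ×ℝ) →ₗ[ℝ] (ℝ×ℝ)} (h1 : f (1,0) = g (1,0)) (h2 : f (0,1) = g (0,1)) :
    f = g := by
  apply LinearMap.ext; intro x
  rw [lin_eval f, lin_eval g, h1, h2]

lemma sq_ne_zero_of_ne_zero {u : ℝ×ℝ} (hu : u ≠ 0) : u.1^2 + u.2^2 ≠ 0 := by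
  intro h
  apply hu
  have h1 : u.1 = 0 := by nlinarith [sq_nonneg u.1, sq_nonneg u.2]
  have h2 : u.2 = 0 := by nlinarith [sq_nonneg u.1, sq_nonneg u.2]
  ext <;> assumption

lemma collinear_of_det_zero {u w : ℝ×ℝ} (hu : u ≠ 0) (hd : u.1*w.2 - u.2*w.1 = 0) :
    ∃ t : ℝ, w = t • u := by
  refine ⟨(w.1*u.1 + w.2*u.2)/(u.1^2 + u.2^2), ?_⟩
  have h := sq_ne_zero_of_ne_zero hu
  ext
  · show w.1 = _ * u.1
    field_simp
    linear_combination (-u.2)*hd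
  · show w.2 = _ * u.2
    field_simp
    linear_combination u.1*hd

lemma double_smul_zero {b : ℝ×ℝ} (h : b = -b) : b = 0 := by
  have h1 := congrArg Prod.fst h
  have h2 := congrArg Prod.snd h
  simp only [Prod.fst_neg, Prod.snd_neg] at h1 h2
  ext
  · simpa using by linarith [h1]
  · simpa using by linarith [h2]

lemma basis_decomp {u w : ℝ×ℝ} (hd : u.1*w.2 - u.2*w.1 ≠ 0) (x : ℝ×ℝ) :
    x = ((x.1*w.2 - x.2*w.1)/(u.1*w.2 - u.2*w.1)) • u
      + ((u.1*x.2 - u.2*x.1)/(u.1*w.2 - u.2*w.1)) • w := by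
  ext
  · simp only [Prod.fst_add, Prod.smul_fst, smul_eq_mul]
    rw [div_mul_eq_mul_div, div_mul_eq_mul_div, ← add_div, eq_div_iff hd]
    ring
  · simp only [Prod.snd_add, Prod.smul_snd, smul_eq_mul]
    rw [div_mul_eq_mul_div, div_mul_eq_mul_div, ← add_div, eq_div_iff hd]
    ring

theorem step1 {K : Set (ℝ×ℝ)} (hK : IsCompact K) (hK0 : (0:ℝ×ℝ) ∈ K) (hsymm : K = -K)
    {u : ℝ×ℝ} (hu : u ≠ 0) (σ : (ℝ×ℝ) →ᵃ[ℝ] (ℝ×ℝ)) (hinv : ∀ x, σ (σ x) = x)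
    (hfix : ∃ x₀ w : ℝ×ℝ, w ≠ 0 ∧ {x | σ x = x} = {x | ∃ t : ℝ, x = x₀ + t • w})
    (hσK : σ '' K = K) (hdir : ∀ x, ∃ t : ℝ, σ x = x + t • u) :
    ∃ p q s : ℝ, p^2 + q*s = 1 ∧ lmk p q s (-p) u = -u ∧ lmk p q s (-p) '' K = K
      ∧ ∃ w : ℝ×ℝ, w ≠ 0 ∧ lmk p q s (-p) w = w := by
  obtain ⟨x₀, w, hw, hset⟩ := hfix
  set f := σ.linear with hf
  have hσx : ∀ x, σ x = f x + σ 0 := by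
    intro x
    conv_lhs => rw [AffineMap.decomp σ]
    rfl
  set b := σ 0 with hb
  have hfbb : f b + b = 0 := by
    have := hinv 0
    rw [hσx b] at this
    linear_combination this
  have hff : ∀ x, f (f x) = x := by
    intro x
    have h := hinv x
    rw [hσx x, hσx (f x + b), map_add] at h
    have h2 : f (f x) + (f b + b) = x := by linear_combination h
    rw [hfbb, add_zero] at h2
    exact h2
  have hfb : f b = -b := by linear_combination hfbb
  -- σ is not the identity
  have hne : ¬ (∀ x, σ x = x) := by
    intro hid
    have hx : x₀ + (-w.2, w.1) ∈ {x | ∃ t : ℝ, x = x₀ + t • w} := by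
      rw [← hset]; exact hid _
    obtain ⟨t, ht⟩ := hx
    have ht2 : ((-w.2, w.1) : ℝ×ℝ) = t • w := add_left_cancel ht
    have h1 : -w.2 = t * w.1 := by
      have := congrArg Prod.fst ht2; simpa using this
    have h2 : w.1 = t * w.2 := by
      have := congrArg Prod.snd ht2; simpa using this
    apply hw
    have hsum : w.1^2 + w.2^2 = 0 := by linear_combination w.1*h2 - w.2*h1
    have hw1 : w.1 = 0 := by nlinarith [sq_nonneg w.1, sq_nonneg w.2]
    have hw2 : w.2 = 0 := by nlinarith [sq_nonneg w.1, sq_nonneg w.2]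
    ext <;> assumption
  obtain ⟨t₀, hb0⟩ := hdir 0
  replace hb0 : b = t₀ • u := by rw [hb, hb0, zero_add]
  have hspan : ∀ x, ∃ t : ℝ, f x = x + t • u := by
    intro x
    obtain ⟨t, ht⟩ := hdir x
    rw [hσx x] at ht
    exact ⟨t - t₀, by rw [sub_smul]; rw [hb0] at ht; linear_combination ht⟩
  -- f u = -u
  have hfu : f u = -u := by
    obtain ⟨t, ht⟩ := hspan u
    have h1 := hff u
    rw [ht, map_add, _root_.map_smul, ht] at h1
    have h2 : (t^2 + 2*t) • u = 0 := by
      have e : (t^2 + 2*t) • u = (u + t • u + t • (u + t • u)) - u := by module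
      rw [e, h1, sub_self]
    have h3 : t = 0 ∨ t = -2 := by
      rcases smul_eq_zero.mp h2 with h | h
      · have hq : t*(t+2) = 0 := by nlinarith [h]
        rcases mul_eq_zero.mp hq with h' | h'
        · left; exact h'
        · right; linarith
      · exact absurd h hu
    rcases h3 with h | h
    · exfalso
      subst h
      rw [zero_smul, add_zero] at ht
      have hfid : ∀ x, f x = x := by
        intro x
        obtain ⟨t', ht'⟩ := hspan x
        have hh := hff x
        rw [ht', map_add, _root_.map_smul, ht', ht] at hh
        have h2 : (2*t') • u = 0 := by
          have e : (2*t') • u = (x + t' • u + t' • u) - x := by module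
          rw [e, hh, sub_self]
        have ht0 : t' = 0 := by
          rcases smul_eq_zero.mp h2 with h | h
          · linarith
          · exact absurd h hu
        rw [ht', ht0, zero_smul, add_zero]
      have hbz : b = 0 := by
        apply double_smul_zero
        rw [← hfb, hfid b]
      exact hne (by intro x; rw [hσx x, hbz, add_zero, hfid x])
    · subst h
      rw [ht]; module
  -- b = 0 using compactness and central symmetry
  have hmem : ∀ x ∈ K, x + b + b ∈ K := by
    intro x hx
    have h1 : -x ∈ K := by
      have : x ∈ -K := hsymm ▸ hx
      simpa using this
    have h2 : σ (-x) ∈ K := hσK ▸ mem_image_of_mem σ h1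
    have h3 : -σ (-x) ∈ K := by
      have : σ (-x) ∈ -K := hsymm ▸ h2
      simpa using this
    have h4 : σ (-σ (-x)) ∈ K := hσK ▸ mem_image_of_mem σ h3
    have he : σ (-σ (-x)) = x + b + b := by
      rw [hσx (-x), hσx (-(f (-x) + b))]
      simp only [map_add, map_neg, hff, hfb]
      ring
    rwa [he] at h4
  have hbz : b = 0 := by
    obtain ⟨z, hzK, hzmax⟩ := hK.exists_isMaxOn ⟨0, hK0⟩
      (Continuous.continuousOn (by fun_prop : Continuous (fun x : ℝ×ℝ => b.1*x.1 + b.2*x.2)))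
    have h1 : z + b + b ∈ K := hmem z hzK
    have h2 : b.1*(z+b+b).1 + b.2*(z+b+b).2 ≤ b.1*z.1 + b.2*z.2 := hzmax h1
    have h3 : b.1^2 + b.2^2 ≤ 0 := by
      simp only [Prod.fst_add, Prod.snd_add] at h2
      nlinarith
    have hb1 : b.1 = 0 := by nlinarith [sq_nonneg b.1, sq_nonneg b.2]
    have hb2 : b.2 = 0 := by nlinarith [sq_nonneg b.1, sq_nonneg b.2]
    ext <;> assumption
  have hσf : ∀ x, σ x = f x := by intro x; rw [hσx x, hbz, add_zero]
  -- fixed vector w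
  have hx₀ : σ x₀ = x₀ := by
    have : x₀ ∈ {x | ∃ t : ℝ, x = x₀ + t • w} := ⟨0, by simp⟩
    rw [← hset] at this; exact this
  have hx₀w : σ (x₀ + w) = x₀ + w := by
    have : x₀ + w ∈ {x | ∃ t : ℝ, x = x₀ + t • w} := ⟨1, by simp⟩
    rw [← hset] at this; exact this
  have hfw : f w = w := by
    have h1 := hσf x₀
    have h2 := hσf (x₀ + w)
    rw [hx₀] at h1
    rw [hx₀w, map_add] at h2
    rw [← h1] at h2
    exact (add_left_cancel h2).symm
  -- independence
  have hd : u.1*w.2 - u.2*w.1 ≠ 0 := by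
    intro hdz
    obtain ⟨t, ht⟩ := collinear_of_det_zero hu hdz
    rw [ht, _root_.map_smul, hfu] at hfw
    have h2 : (2*t) • u = 0 := by
      have e : (2*t) • u = t • u - t • (-u) := by module
      rw [e, hfw, sub_self]
    rcases smul_eq_zero.mp h2 with h | h
    · have htz : t = 0 := by linarith
      exact hw (by rw [ht, htz, zero_smul])
    · exact hu h
  -- entries
  set p := (f (1,0)).1 with hp
  set s := (f (1,0)).2 with hs
  set q := (f (0,1)).1 with hq
  set t' := (f (0,1)).2 with ht'
  have hfuc := lin_eval f u
  rw [hfu] at hfuc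
  have eq1 : u.1*p + u.2*q = -u.1 := by
    have := congrArg Prod.fst hfuc
    simp only [Prod.fst_add, Prod.smul_fst, Prod.fst_neg, smul_eq_mul] at this
    rw [← hp, ← hq] at this; linarith [this]
  have eq2 : u.1*s + u.2*t' = -u.2 := by
    have := congrArg Prod.snd hfuc
    simp only [Prod.snd_add, Prod.smul_snd, Prod.snd_neg, smul_eq_mul] at this
    rw [← hs, ← ht'] at this; linarith [this]
  have hfwc := lin_eval f w
  rw [hfw] at hfwc
  have eq3 : w.1*p + w.2*q = w.1 := by
    have := congrArg Prod.fst hfwc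
    simp only [Prod.fst_add, Prod.smul_fst, smul_eq_mul] at this
    rw [← hp, ← hq] at this; linarith [this]
  have eq4 : w.1*s + w.2*t' = w.2 := by
    have := congrArg Prod.snd hfwc
    simp only [Prod.snd_add, Prod.smul_snd, smul_eq_mul] at this
    rw [← hs, ← ht'] at this; linarith [this]
  set d := u.1*w.2 - u.2*w.1 with hdd
  have hdp : d*p = -(u.1*w.2 + u.2*w.1) := by linear_combination w.2*eq1 - u.2*eq3
  have hdq : d*q = 2*u.1*w.1 := by linear_combination -w.1*eq1 + u.1*eq3
  have hds : d*s = -(2*u.2*w.2) := by linear_combination w.2*eq2 - u.2*eq4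
  have hdt : d*t' = u.1*w.2 + u.2*w.1 := by linear_combination -w.1*eq2 + u.1*eq4
  have hpt : t' = -p := by
    have h0 : d*(t' + p) = 0 := by linear_combination hdt + hdp
    rcases mul_eq_zero.mp h0 with h | h
    · exact absurd h hd
    · linarith
  have hdet : p^2 + q*s = 1 := by
    have hd2 : d^2 ≠ 0 := pow_ne_zero 2 hd
    have h0 : d^2*(p^2 + q*s) = d^2*1 := by
      rw [mul_one]
      linear_combination (d*p - (u.1*w.2 + u.2*w.1))*hdp + (d*s)*hdq + (2*u.1*w.1)*hds
    exact mul_left_cancel₀ hd2 h0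
  have hflmk : f = lmk p q s (-p) := by
    apply lin_ext
    · rw [lmk_apply]; ext <;> simp [hp, hs]
    · rw [lmk_apply]; ext <;> simp [hq, ← hpt, ht']
  refine ⟨p, q, s, hdet, by rw [← hflmk]; exact hfu, ?_, w, hw, by rw [← hflmk]; exact hfw⟩
  rw [← hflmk]
  have himg : ⇑f '' K = ⇑σ '' K := image_congr (fun x _ => (hσf x).symm)
  rw [himg, hσK]

lemma lmk_invol {p q s : ℝ} (hpqs : p^2 + q*s = 1) (x : ℝ×ℝ) :
    lmk p q s (-p) (lmk p q s (-p) x) = x := by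
  simp only [lmk_apply]
  ext
  · show p*(p*x.1+q*x.2) + q*(s*x.1 + -p*x.2) = x.1
    linear_combination x.1*hpqs
  · show s*(p*x.1+q*x.2) + -p*(s*x.1 + -p*x.2) = x.2
    linear_combination x.2*hpqs

lemma int_inv {K : Set (ℝ×ℝ)} (hK : IsCompact K) {p q s : ℝ} (hpqs : p^2 + q*s = 1)
    (hRK : lmk p q s (-p) '' K = K) (g : (ℝ×ℝ) → ℝ) :
    ∫ x in K, g x = ∫ x in K, g (lmk p q s (-p) x) := by
  set R := lmk p q s (-p) with hR
  have hRR : ∀ x, R (R x) = x := lmk_invol hpqs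
  have hcomp : R ∘ₗ R = LinearMap.id := LinearMap.ext hRR
  have hdet1 : LinearMap.det R * LinearMap.det R = 1 := by
    rw [← LinearMap.det_comp, hcomp, LinearMap.det_id]
  have habs2 : |LinearMap.det R| = 1 := by
    rcases mul_self_eq_one_iff.mp hdet1 with h | h <;> simp [h]
  have habs : |(LinearMap.toContinuousLinearMap R).det| = 1 := by
    have : (LinearMap.toContinuousLinearMap R).det = LinearMap.det R := by
      simp [ContinuousLinearMap.det]
    rw [this, habs2]
  have hinj : Set.InjOn (⇑R) K :=
    (Function.LeftInverse.injective (g := ⇑R) hRR).injOn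
  have hmeas : MeasurableSet K := hK.isClosed.measurableSet
  have hderiv : ∀ x ∈ K, HasFDerivWithinAt (⇑R)
      ((LinearMap.toContinuousLinearMap R)) K x := by
    intro x _
    exact (LinearMap.toContinuousLinearMap R).hasFDerivAt.hasFDerivWithinAt
  calc ∫ x in K, g x = ∫ x in R '' K, g x := by rw [hRK]
    _ = ∫ x in K, |(LinearMap.toContinuousLinearMap R).det| • g (R x) :=
        integral_image_eq_integral_abs_det_fderiv_smul volume hmeas hderiv hinj g
    _ = ∫ x in K, g (R x) := by simp [habs, habs2]

def Bform (ia ib ic : ℝ) (x y : ℝ×ℝ) : ℝ :=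
  ic*x.1*y.1 - ib*(x.1*y.2 + x.2*y.1) + ia*x.2*y.2

lemma integrable_poly {K : Set (ℝ×ℝ)} (hK : IsCompact K) (g : (ℝ×ℝ) → ℝ) (hg : Continuous g) :
    IntegrableOn g K volume :=
  hg.continuousOn.integrableOn_compact hK

lemma expand_bilin {K : Set (ℝ×ℝ)} (hK : IsCompact K) (α β γ δ : ℝ) :
    ∫ z in K, (α*z.1 + β*z.2)*(γ*z.1 + δ*z.2) =
      (α*γ)*(∫ z in K, z.1^2) + (α*δ+β*γ)*(∫ z in K, z.1*z.2) + (β*δ)*(∫ z in K, z.2^2) := by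
  have i1 : IntegrableOn (fun z : ℝ×ℝ => z.1^2) K volume := integrable_poly hK _ (by fun_prop)
  have i2 : IntegrableOn (fun z : ℝ×ℝ => z.1*z.2) K volume := integrable_poly hK _ (by fun_prop)
  have i3 : IntegrableOn (fun z : ℝ×ℝ => z.2^2) K volume := integrable_poly hK _ (by fun_prop)
  have j1 : IntegrableOn (fun z : ℝ×ℝ => (α*γ)*z.1^2) K volume := integrable_poly hK _ (by fun_prop)
  have j2 : IntegrableOn (fun z : ℝ×ℝ => (α*δ+β*γ)*(z.1*z.2)) K volume := integrable_poly hK _ (by fun_prop)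
  have j3 : IntegrableOn (fun z : ℝ×ℝ => (β*δ)*z.2^2) K volume := integrable_poly hK _ (by fun_prop)
  have j23 : IntegrableOn (fun z : ℝ×ℝ => (α*δ+β*γ)*(z.1*z.2) + (β*δ)*z.2^2) K volume :=
    integrable_poly hK _ (by fun_prop)
  have h123 : ∫ z in K, ((α*γ)*z.1^2 + ((α*δ+β*γ)*(z.1*z.2) + (β*δ)*z.2^2))
      = (∫ z in K, (α*γ)*z.1^2) + (∫ z in K, ((α*δ+β*γ)*(z.1*z.2) + (β*δ)*z.2^2)) :=
    integral_add j1 j23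
  have h23 : ∫ z in K, ((α*δ+β*γ)*(z.1*z.2) + (β*δ)*z.2^2)
      = (∫ z in K, (α*δ+β*γ)*(z.1*z.2)) + (∫ z in K, (β*δ)*z.2^2) :=
    integral_add j2 j3
  calc ∫ z in K, (α*z.1 + β*z.2)*(γ*z.1 + δ*z.2)
      = ∫ z in K, ((α*γ)*z.1^2 + ((α*δ+β*γ)*(z.1*z.2) + (β*δ)*z.2^2)) :=
        integral_congr_ae (Filter.Eventually.of_forall (fun z => by ring))
    _ = _ := by
        rw [h123, h23, integral_const_mul, integral_const_mul, integral_const_mul]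
        ring

lemma binv_alg {ia ib ic p q s : ℝ}
    (hE1 : ia = p^2*ia + 2*p*q*ib + q^2*ic)
    (hE2 : ib = p*s*ia + (q*s - p^2)*ib - p*q*ic)
    (hE3 : ic = s^2*ia - 2*p*s*ib + p^2*ic)
    (x y : ℝ×ℝ) : Bform ia ib ic (lmk p q s (-p) x) (lmk p q s (-p) y) = Bform ia ib ic x y := by
  simp only [Bform, lmk_apply]
  linear_combination -(x.1*y.1)*hE3 - (x.2*y.2)*hE1 + (x.1*y.2 + x.2*y.1)*hE2

lemma moms {K : Set (ℝ×ℝ)} (hK : IsCompact K) {p q s : ℝ} (hpqs : p^2 + q*s = 1)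
    (hRK : lmk p q s (-p) '' K = K) :
    ((∫ z in K, z.1^2) = p^2*(∫ z in K, z.1^2) + 2*p*q*(∫ z in K, z.1*z.2) + q^2*(∫ z in K, z.2^2))
    ∧ ((∫ z in K, z.1*z.2) = p*s*(∫ z in K, z.1^2) + (q*s - p^2)*(∫ z in K, z.1*z.2) - p*q*(∫ z in K, z.2^2))
    ∧ ((∫ z in K, z.2^2) = s^2*(∫ z in K, z.1^2) - 2*p*s*(∫ z in K, z.1*z.2) + p^2*(∫ z in K, z.2^2)) := by
  refine ⟨?_, ?_, ?_⟩
  · have h := int_inv hK hpqs hRK (fun z => z.1^2)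
    simp only [lmk_apply] at h
    conv_lhs => rw [h]
    have h2 : ∫ z in K, (p*z.1 + q*z.2)^2 = ∫ z in K, (p*z.1 + q*z.2)*(p*z.1 + q*z.2) :=
      integral_congr_ae (Filter.Eventually.of_forall (fun z => by ring))
    rw [h2, expand_bilin hK]
    ring
  · have h := int_inv hK hpqs hRK (fun z => z.1*z.2)
    simp only [lmk_apply] at h
    conv_lhs => rw [h]
    rw [expand_bilin hK]
    ring
  · have h := int_inv hK hpqs hRK (fun z => z.2^2)
    simp only [lmk_apply] at h
    conv_lhs => rw [h]
    have h2 : ∫ z in K, (s*z.1 + -p*z.2)^2 = ∫ z in K, (s*z.1 + -p*z.2)*(s*z.1 + -p*z.2) :=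
      integral_congr_ae (Filter.Eventually.of_forall (fun z => by ring))
    rw [h2, expand_bilin hK]
    ring

lemma sqsum_pos {v : ℝ×ℝ} (hv : v ≠ 0) : 0 < v.1^2 + v.2^2 := by
  rcases lt_or_eq_of_le (by positivity : (0:ℝ) ≤ v.1^2 + v.2^2) with h | h
  · exact h
  · exfalso
    apply hv
    have h1 : v.1 = 0 := by nlinarith [sq_nonneg v.1, sq_nonneg v.2]
    have h2 : v.2 = 0 := by nlinarith [sq_nonneg v.1, sq_nonneg v.2]
    ext <;> assumption

lemma moment_pos {K : Set (ℝ×ℝ)} (hK : IsCompact K) (hKint : (0:ℝ×ℝ) ∈ interior K)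
    {v : ℝ×ℝ} (hv : v ≠ 0) : 0 < ∫ z in K, (v.1*z.1 + v.2*z.2)^2 := by
  obtain ⟨ε, hε, hball⟩ := Metric.mem_nhds_iff.mp (mem_interior_iff_mem_nhds.mp hKint)
  set m := v.1^2 + v.2^2 with hm
  have hmpos : 0 < m := sqsum_pos hv
  set A := |v.1| + |v.2| + 1 with hA
  have hApos : (0:ℝ) < A := by positivity
  set c := ε / (2*A) with hc
  have hcpos : 0 < c := by positivity
  set z₀ := c • v with hz₀
  have hcA : c * A = ε/2 := by
    rw [hc]
    field_simp
  have hz₀norm : ‖z₀‖ ≤ ε/2 := by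
    have h1 : ‖z₀‖ = c * ‖v‖ := by
      rw [hz₀, norm_smul, Real.norm_eq_abs, abs_of_pos hcpos]
    have h2 : ‖v‖ ≤ A := by
      rw [Prod.norm_def]
      apply max_le
      · simp only [Real.norm_eq_abs, hA]
        linarith [abs_nonneg v.1, abs_nonneg v.2]
      · simp only [Real.norm_eq_abs, hA]
        linarith [abs_nonneg v.1, abs_nonneg v.2]
    calc ‖z₀‖ = c * ‖v‖ := h1
      _ ≤ c * A := mul_le_mul_of_nonneg_left h2 hcpos.le
      _ = ε/2 := hcA
  set ρ := min (ε/2) (c*m/(2*A)) with hρ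
  have hρpos : 0 < ρ := by
    apply lt_min
    · positivity
    · positivity
  have hdot : ∀ x ∈ Metric.ball z₀ ρ, c*m/2 ≤ v.1*x.1 + v.2*x.2 := by
    intro x hx
    have hd1 : |x.1 - z₀.1| ≤ ‖x - z₀‖ := by
      have := norm_fst_le (x - z₀)
      simpa using this
    have hd2 : |x.2 - z₀.2| ≤ ‖x - z₀‖ := by
      have := norm_snd_le (x - z₀)
      simpa using this
    have hxz : ‖x - z₀‖ < ρ := by
      rw [← dist_eq_norm]; exact hx
    have hdotz : v.1*z₀.1 + v.2*z₀.2 = c*m := by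
      rw [hz₀, hm]
      simp only [Prod.smul_fst, Prod.smul_snd, smul_eq_mul]
      ring
    have hb1 : |v.1*(x.1 - z₀.1)| ≤ |v.1| * ρ := by
      rw [abs_mul]
      exact mul_le_mul_of_nonneg_left (le_trans hd1 hxz.le) (abs_nonneg _)
    have hb2 : |v.2*(x.2 - z₀.2)| ≤ |v.2| * ρ := by
      rw [abs_mul]
      exact mul_le_mul_of_nonneg_left (le_trans hd2 hxz.le) (abs_nonneg _)
    have hest : |v.1*x.1 + v.2*x.2 - (v.1*z₀.1 + v.2*z₀.2)| ≤ (|v.1| + |v.2|) * ρ := by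
      have e : v.1*x.1 + v.2*x.2 - (v.1*z₀.1 + v.2*z₀.2)
          = v.1*(x.1 - z₀.1) + v.2*(x.2 - z₀.2) := by ring
      rw [e]
      calc |v.1*(x.1 - z₀.1) + v.2*(x.2 - z₀.2)|
          ≤ |v.1*(x.1 - z₀.1)| + |v.2*(x.2 - z₀.2)| := abs_add_le _ _
        _ ≤ |v.1| * ρ + |v.2| * ρ := add_le_add hb1 hb2
        _ = (|v.1| + |v.2|) * ρ := by ring
    have hρ2 : (|v.1| + |v.2|) * ρ ≤ c*m/2 := by
      have h1 : ρ ≤ c*m/(2*A) := min_le_right _ _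
      have h2 : (|v.1| + |v.2|) ≤ A := by rw [hA]; linarith
      have h3 : (|v.1| + |v.2|) * ρ ≤ A * (c*m/(2*A)) :=
        mul_le_mul h2 h1 hρpos.le hApos.le
      have h4 : A * (c*m/(2*A)) = c*m/2 := by
        field_simp
      linarith
    have h6 := abs_le.mp (le_trans hest hρ2)
    have h7 := h6.1
    rw [hdotz] at h7
    linarith
  have hsub : Metric.ball z₀ ρ ⊆ K := by
    intro x hx
    apply hball
    have hxz : ‖x - z₀‖ < ρ := by rw [← dist_eq_norm]; exact hx
    have h1 : ‖x‖ ≤ ‖x - z₀‖ + ‖z₀‖ := by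
      have e : x = (x - z₀) + z₀ := by ring
      calc ‖x‖ = ‖(x - z₀) + z₀‖ := by rw [← e]
        _ ≤ ‖x - z₀‖ + ‖z₀‖ := norm_add_le _ _
    have h2 : ‖x‖ < ε := by
      have h3 : ρ ≤ ε/2 := min_le_left _ _
      linarith
    simpa [Metric.mem_ball, dist_eq_norm] using h2
  have hint : IntegrableOn (fun z : ℝ×ℝ => (v.1*z.1 + v.2*z.2)^2) K volume :=
    integrable_poly hK _ (by fun_prop)
  have hnonneg : ∀ z : ℝ×ℝ, 0 ≤ (v.1*z.1 + v.2*z.2)^2 := fun z => sq_nonneg _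
  have hmono : ∫ z in Metric.ball z₀ ρ, (v.1*z.1 + v.2*z.2)^2 ≤ ∫ z in K, (v.1*z.1 + v.2*z.2)^2 := by
    apply setIntegral_mono_set hint
    · exact Filter.Eventually.of_forall hnonneg
    · exact HasSubset.Subset.eventuallyLE hsub
  have hlow : (c*m/2)^2 * (volume (Metric.ball z₀ ρ)).toReal
      ≤ ∫ z in Metric.ball z₀ ρ, (v.1*z.1 + v.2*z.2)^2 := by
    rw [show (c*m/2)^2 * (volume (Metric.ball z₀ ρ)).toReal
        = (c*m/2)^2 * volume.real (Metric.ball z₀ ρ) from rfl]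
    apply setIntegral_ge_of_const_le_real measurableSet_ball
    · exact (measure_ball_lt_top).ne
    · intro x hx
      have h := hdot x hx
      have h0 : (0:ℝ) ≤ c*m/2 := by positivity
      exact pow_le_pow_left₀ h0 h 2
    · exact hint.mono_set hsub
  have hballpos : 0 < (volume (Metric.ball z₀ ρ)).toReal := by
    apply ENNReal.toReal_pos
    · exact (Metric.measure_ball_pos volume z₀ hρpos).ne'
    · exact (measure_ball_lt_top).ne
  calc (0:ℝ) < (c*m/2)^2 * (volume (Metric.ball z₀ ρ)).toReal := by positivity
    _ ≤ _ := le_trans hlow hmono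

def lemk (p q s t : ℝ) (h : p*t - q*s ≠ 0) : (ℝ×ℝ) ≃ₗ[ℝ] (ℝ×ℝ) where
  toLinearMap := lmk p q s t
  invFun := fun x => ((t*x.1 - q*x.2)/(p*t-q*s), (-s*x.1 + p*x.2)/(p*t-q*s))
  left_inv := by
    intro x
    simp only [lmk_apply, LinearMap.coe_mk, AddHom.coe_mk]
    ext
    · show (t*(p*x.1+q*x.2) - q*(s*x.1+t*x.2))/(p*t-q*s) = x.1
      rw [div_eq_iff h]
      ring
    · show (-s*(p*x.1+q*x.2) + p*(s*x.1+t*x.2))/(p*t-q*s) = x.2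
      rw [div_eq_iff h]
      ring
  right_inv := by
    intro x
    simp only [lmk_apply, LinearMap.coe_mk, AddHom.coe_mk]
    ext
    · show p*((t*x.1 - q*x.2)/(p*t-q*s)) + q*((-s*x.1 + p*x.2)/(p*t-q*s)) = x.1
      field_simp
      ring
    · show s*((t*x.1 - q*x.2)/(p*t-q*s)) + t*((-s*x.1 + p*x.2)/(p*t-q*s)) = x.2
      rw [mul_div_assoc', mul_div_assoc', ← add_div, div_eq_iff h]
      ring

@[simp] lemma lemk_apply (p q s t : ℝ) (h : p*t - q*s ≠ 0) (x : ℝ×ℝ) :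
    lemk p q s t h x = (p*x.1 + q*x.2, s*x.1 + t*x.2) := rfl

lemma BT (ia ib ic : ℝ) (e : ℝ) (he : e ≠ 0) (he2 : e^2 = ia*ic - ib^2)
    (hdet : (1:ℝ)*(ic/e) - (ib/e)*0 ≠ 0) (x y : ℝ×ℝ) :
    Bform ia ib ic (lemk 1 (ib/e) 0 (ic/e) hdet x) (lemk 1 (ib/e) 0 (ic/e) hdet y)
      = ic*(x.1*y.1 + x.2*y.2) := by
  simp only [Bform, lemk_apply]
  field_simp
  linear_combination (-(ic*x.2*y.2))*he2

lemma std_reflection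
    (ia ib ic : ℝ) (hic : ic ≠ 0) (e : ℝ) (he : e ≠ 0) (he2 : e^2 = ia*ic - ib^2)
    (hdet : (1:ℝ)*(ic/e) - (ib/e)*0 ≠ 0)
    (R : (ℝ×ℝ) →ₗ[ℝ] (ℝ×ℝ)) (hRR : ∀ x, R (R x) = x)
    (hBinv : ∀ x y, Bform ia ib ic (R x) (R y) = Bform ia ib ic x y)
    {v : ℝ×ℝ} (hv : v ≠ 0)
    (hRu : R (lemk 1 (ib/e) 0 (ic/e) hdet v) = -(lemk 1 (ib/e) 0 (ic/e) hdet v))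
    (hw : ∃ w : ℝ×ℝ, w ≠ 0 ∧ R w = w) :
    ∀ x, lemk 1 (ib/e) 0 (ic/e) hdet
        ((lmk ((v.2^2-v.1^2)/(v.1^2+v.2^2)) (-2*v.1*v.2/(v.1^2+v.2^2))
          (-2*v.1*v.2/(v.1^2+v.2^2)) (-((v.2^2-v.1^2)/(v.1^2+v.2^2)))) x)
      = R (lemk 1 (ib/e) 0 (ic/e) hdet x) := by
  set T₀ := lemk 1 (ib/e) 0 (ic/e) hdet with hT₀
  set n := v.1^2 + v.2^2 with hn
  have hnpos : 0 < n := by rw [hn]; exact sqsum_pos hv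
  set a := (v.2^2-v.1^2)/n with ha
  set b := -2*v.1*v.2/n with hb
  set S := lmk a b b (-a) with hS
  set R' := T₀.symm.toLinearMap ∘ₗ (R ∘ₗ T₀.toLinearMap) with hR'
  have hR'app : ∀ x, R' x = T₀.symm (R (T₀ x)) := fun x => rfl
  have hTR' : ∀ x, T₀ (R' x) = R (T₀ x) := by
    intro x
    rw [hR'app, LinearEquiv.apply_symm_apply]
  have hdotinv : ∀ x y, (R' x).1*(R' y).1 + (R' x).2*(R' y).2 = x.1*y.1 + x.2*y.2 := by
    intro x y
    have h1 : ic*((R' x).1*(R' y).1 + (R' x).2*(R' y).2) = ic*(x.1*y.1 + x.2*y.2) := by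
      rw [← BT ia ib ic e he he2 hdet (R' x) (R' y), ← BT ia ib ic e he he2 hdet x y]
      rw [show lemk 1 (ib/e) 0 (ic/e) hdet (R' x) = T₀ (R' x) from rfl,
          show lemk 1 (ib/e) 0 (ic/e) hdet (R' y) = T₀ (R' y) from rfl,
          hTR', hTR', hBinv]
    exact mul_left_cancel₀ hic h1
  have hR'v : R' v = -v := by
    rw [hR'app, hRu, map_neg, LinearEquiv.symm_apply_apply]
  set vp : ℝ×ℝ := (-v.2, v.1) with hvp
  have hvpne : vp ≠ 0 := by
    intro h
    apply hv
    have h1 := congrArg Prod.fst h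
    have h2 := congrArg Prod.snd h
    simp only [hvp] at h1 h2
    ext
    · simpa using h2
    · simpa using by linarith [show -v.2 = 0 from by simpa using h1]
  set z := R' vp with hz
  have hzv : z.1*v.1 + z.2*v.2 = 0 := by
    have h1 := hdotinv vp v
    rw [hR'v] at h1
    simp only [Prod.fst_neg, Prod.snd_neg, hvp] at h1
    rw [hz]
    simp only [hvp]
    linear_combination -h1
  have hzz : z.1^2 + z.2^2 = n := by
    have h1 := hdotinv vp vp
    simp only [hvp] at h1
    rw [hz]
    simp only [hvp, hn]
    linear_combination h1
  obtain ⟨lam, hlam⟩ : ∃ t : ℝ, z = t • vp := by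
    apply collinear_of_det_zero hvpne
    simp only [hvp]
    show -v.2*z.2 - v.1*z.1 = 0
    linarith [hzv]
  have hd : v.1*vp.2 - v.2*vp.1 ≠ 0 := by
    have hdn : v.1*vp.2 - v.2*vp.1 = n := by simp only [hvp, hn]; ring
    rw [hdn]
    exact ne_of_gt hnpos
  have hlam2 : (lam - 1)*(lam + 1) = 0 := by
    have hc1 : z.1 = lam * vp.1 := by rw [hlam]; rfl
    have hc2 : z.2 = lam * vp.2 := by rw [hlam]; rfl
    have hln : lam^2 * n = n := by
      have h1 := hzz
      rw [hc1, hc2] at h1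
      simp only [hvp] at h1
      rw [hn]
      linear_combination h1
    have h2 : (lam^2 - 1) * n = 0 := by linear_combination hln
    rcases mul_eq_zero.mp h2 with h | h
    · linear_combination h
    · exact absurd h (ne_of_gt hnpos)
  have hlamval : lam = 1 := by
    rcases mul_eq_zero.mp hlam2 with h | h
    · linarith
    · exfalso
      have hlneg : lam = -1 := by linarith
      obtain ⟨w, hwne, hRw⟩ := hw
      have hzneg : R' vp = -vp := by
        rw [← hz, hlam, hlneg, neg_one_smul]
      have hallneg : ∀ x, R' x = -x := by
        intro x
        conv_lhs => rw [basis_decomp hd x]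
        conv_rhs => rw [basis_decomp hd x]
        rw [map_add, _root_.map_smul, _root_.map_smul, hR'v, hzneg]
        module
      have hw'' : R' (T₀.symm w) = T₀.symm w := by
        rw [hR'app, LinearEquiv.apply_symm_apply, hRw]
      have hzero : T₀.symm w = 0 := by
        have h2 := hallneg (T₀.symm w)
        rw [hw''] at h2
        exact double_smul_zero h2
      apply hwne
      have h3 := congrArg T₀ hzero
      rwa [LinearEquiv.apply_symm_apply, map_zero] at h3
  have hzvp : R' vp = vp := by rw [← hz, hlam, hlamval, one_smul]
  have hSv : S v = -v := by
    rw [hS, lmk_apply]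
    have h1 : a*v.1 + b*v.2 = -v.1 := by
      rw [ha, hb]
      field_simp
      ring
    have h2 : b*v.1 + -a*v.2 = -v.2 := by
      rw [ha, hb]
      field_simp
      ring
    rw [h1, h2]
    rfl
  have hSvp : S vp = vp := by
    rw [hS, lmk_apply]
    have h1 : a*vp.1 + b*vp.2 = vp.1 := by
      rw [ha, hb]
      simp only [hvp]
      field_simp
      ring
    have h2 : b*vp.1 + -a*vp.2 = vp.2 := by
      rw [ha, hb]
      simp only [hvp]
      field_simp
      ring
    rw [h1, h2]
  intro x
  have hSR' : S x = R' x := by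
    conv_lhs => rw [basis_decomp hd x]
    conv_rhs => rw [basis_decomp hd x]
    rw [map_add, map_add, _root_.map_smul, _root_.map_smul, _root_.map_smul, _root_.map_smul,
        hSv, hSvp, hR'v, hzvp]
  rw [show (lmk a b b (-a)) x = S x from rfl, hSR', hTR']

lemma rot_image {K' : Set (ℝ×ℝ)}
    (hrefl : ∀ v : ℝ×ℝ, v ≠ 0 →
      (lmk ((v.2^2-v.1^2)/(v.1^2+v.2^2)) (-2*v.1*v.2/(v.1^2+v.2^2))
        (-2*v.1*v.2/(v.1^2+v.2^2)) (-((v.2^2-v.1^2)/(v.1^2+v.2^2)))) '' K' = K')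
    (θ : ℝ) : (lmk (Real.cos θ) (-Real.sin θ) (Real.sin θ) (Real.cos θ)) '' K' = K' := by
  set v : ℝ×ℝ := (Real.cos (θ/2), Real.sin (θ/2)) with hv
  have hn : v.1^2 + v.2^2 = 1 := by
    simp only [hv]
    exact Real.cos_sq_add_sin_sq (θ/2)
  have hvne : v ≠ 0 := by
    intro h
    rw [h] at hn
    norm_num at hn
  have e2 := hrefl v hvne
  have e1 := hrefl (1,0) (by
    intro h
    have := congrArg Prod.fst h
    norm_num at this)
  -- identify the two reflections
  have hA : (v.2^2 - v.1^2)/(v.1^2+v.2^2) = -Real.cos θ := by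
    rw [hn, div_one]
    have h2 : Real.cos (2*(θ/2)) = 2*Real.cos (θ/2)^2 - 1 := Real.cos_two_mul (θ/2)
    have h3 := Real.sin_sq_add_cos_sq (θ/2)
    rw [show θ = 2*(θ/2) by ring, h2]
    simp only [hv]
    linear_combination h3
  have hB : -2*v.1*v.2/(v.1^2+v.2^2) = -Real.sin θ := by
    rw [hn, div_one]
    have h2 : Real.sin (2*(θ/2)) = 2 * Real.sin (θ/2) * Real.cos (θ/2) := Real.sin_two_mul (θ/2)
    rw [show θ = 2*(θ/2) by ring, h2]
    simp only [hv]
    ring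
  rw [hA, hB] at e2
  have e1' : (lmk (-1) 0 0 1) '' K' = K' := by
    have heq : lmk ((((1:ℝ),(0:ℝ)).2^2-((1:ℝ),(0:ℝ)).1^2)/(((1:ℝ),(0:ℝ)).1^2+((1:ℝ),(0:ℝ)).2^2))
        (-2*((1:ℝ),(0:ℝ)).1*((1:ℝ),(0:ℝ)).2/(((1:ℝ),(0:ℝ)).1^2+((1:ℝ),(0:ℝ)).2^2))
        (-2*((1:ℝ),(0:ℝ)).1*((1:ℝ),(0:ℝ)).2/(((1:ℝ),(0:ℝ)).1^2+((1:ℝ),(0:ℝ)).2^2))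
        (-((((1:ℝ),(0:ℝ)).2^2-((1:ℝ),(0:ℝ)).1^2)/(((1:ℝ),(0:ℝ)).1^2+((1:ℝ),(0:ℝ)).2^2)))
        = lmk (-1) 0 0 1 := by
      apply lin_ext <;> · simp only [lmk_apply]; norm_num
    rw [← heq]
    exact e1
  have hcomp : ⇑(lmk (Real.cos θ) (-Real.sin θ) (Real.sin θ) (Real.cos θ))
      = ⇑(lmk (-Real.cos θ) (-Real.sin θ) (-Real.sin θ) (-(-Real.cos θ))) ∘ ⇑(lmk (-1) 0 0 1) := by
    funext x
    simp only [Function.comp_apply, lmk_apply]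
    ext
    · show Real.cos θ*x.1 + -Real.sin θ*x.2
        = -Real.cos θ*(-1*x.1 + 0*x.2) + -Real.sin θ*(0*x.1 + 1*x.2)
      ring
    · show Real.sin θ*x.1 + Real.cos θ*x.2
        = -Real.sin θ*(-1*x.1 + 0*x.2) + -(-Real.cos θ)*(0*x.1 + 1*x.2)
      ring
  rw [hcomp, image_comp, e1', e2]

lemma exists_cos_sin {C S : ℝ} (h : C^2 + S^2 = 1) :
    ∃ θ : ℝ, Real.cos θ = C ∧ Real.sin θ = S := by
  have hC1 : -1 ≤ C ∧ C ≤ 1 := by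
    constructor <;> nlinarith [sq_nonneg S, sq_nonneg (C-1), sq_nonneg (C+1)]
  have hS2 : 1 - C^2 = S^2 := by linarith
  rcases le_or_gt 0 S with hS | hS
  · refine ⟨Real.arccos C, Real.cos_arccos hC1.1 hC1.2, ?_⟩
    rw [Real.sin_arccos, hS2, Real.sqrt_sq hS]
  · refine ⟨-Real.arccos C, ?_, ?_⟩
    · rw [Real.cos_neg]; exact Real.cos_arccos hC1.1 hC1.2
    · rw [Real.sin_neg, Real.sin_arccos, hS2, Real.sqrt_sq_eq_abs, abs_of_neg hS]
      ring

lemma rot_ball {K' : Set (ℝ×ℝ)} (hc : IsCompact K') (hconv : Convex ℝ K')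
    (hne : ∃ x ∈ K', x ≠ 0)
    (hrot : ∀ θ : ℝ, (lmk (Real.cos θ) (-Real.sin θ) (Real.sin θ) (Real.cos θ)) '' K' = K') :
    ∃ r2 : ℝ, 0 < r2 ∧ K' = {x : ℝ×ℝ | x.1^2 + x.2^2 ≤ r2} := by
  obtain ⟨x₁, hx₁K, hx₁⟩ := hne
  obtain ⟨z, hzK, hzmax⟩ := hc.exists_isMaxOn ⟨x₁, hx₁K⟩
    (Continuous.continuousOn (by fun_prop : Continuous (fun x : ℝ×ℝ => x.1^2 + x.2^2)))
  set r2 := z.1^2 + z.2^2 with hr2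
  have hr2pos : 0 < r2 := lt_of_lt_of_le (sqsum_pos hx₁) (hzmax hx₁K)
  refine ⟨r2, hr2pos, ?_⟩
  -- rotate z to any point of the circle of radius r2
  have hcircle : ∀ y : ℝ×ℝ, y.1^2 + y.2^2 = r2 → y ∈ K' := by
    intro y hy
    set C := (z.1*y.1 + z.2*y.2)/r2 with hC
    set Sn := (z.1*y.2 - z.2*y.1)/r2 with hSn
    have hr2ne : r2 ≠ 0 := ne_of_gt hr2pos
    have hCz : r2 * C = z.1*y.1 + z.2*y.2 := by rw [hC]; field_simp
    have hSz : r2 * Sn = z.1*y.2 - z.2*y.1 := by rw [hSn]; field_simp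
    have hCS : C^2 + Sn^2 = 1 := by
      have h0 : r2^2 * (C^2 + Sn^2) = r2^2 * 1 := by
        linear_combination (r2*C + (z.1*y.1+z.2*y.2))*hCz + (r2*Sn + (z.1*y.2-z.2*y.1))*hSz
          + (z.1^2+z.2^2)*hy - (y.1^2+y.2^2+r2)*hr2
      exact mul_left_cancel₀ (pow_ne_zero 2 hr2ne) h0
    obtain ⟨θ, hcos, hsin⟩ := exists_cos_sin hCS
    have hmem : lmk (Real.cos θ) (-Real.sin θ) (Real.sin θ) (Real.cos θ) z ∈ K' := by
      rw [← hrot θ]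
      exact mem_image_of_mem _ hzK
    have hzy : lmk (Real.cos θ) (-Real.sin θ) (Real.sin θ) (Real.cos θ) z = y := by
      rw [hcos, hsin, lmk_apply]
      have hy1 : r2 * (C*z.1 + -Sn*z.2) = r2 * y.1 := by
        linear_combination z.1*hCz - z.2*hSz - y.1*hr2
      have hy2 : r2 * (Sn*z.1 + C*z.2) = r2 * y.2 := by
        linear_combination z.1*hSz + z.2*hCz - y.2*hr2
      ext
      · exact mul_left_cancel₀ hr2ne hy1
      · exact mul_left_cancel₀ hr2ne hy2
    rwa [hzy] at hmem
  apply Subset.antisymm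
  · intro x hx
    exact hzmax hx
  · intro x hx
    simp only [mem_setOf_eq] at hx
    by_cases hx0 : x = 0
    · -- 0 is the midpoint of z and -z
      have hz' : -z ∈ K' := by
        apply hcircle
        simp only [Prod.fst_neg, Prod.snd_neg]
        rw [hr2]
        ring
      have := hconv hzK hz' (by norm_num : (0:ℝ) ≤ (1:ℝ)/2) (by norm_num : (0:ℝ) ≤ (1:ℝ)/2)
        (by norm_num)
      rw [hx0]
      convert this using 1
      module
    · -- scale x out to the circle
      have hfx : 0 < x.1^2 + x.2^2 := sqsum_pos hx0
      set lam := Real.sqrt (r2 / (x.1^2 + x.2^2)) with hlam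
      have hlam1 : 1 ≤ lam := by
        rw [hlam]
        apply Real.one_le_sqrt.mpr
        rw [le_div_iff₀ hfx]
        linarith
      have hlampos : 0 < lam := lt_of_lt_of_le one_pos hlam1
      have hlamsq : lam^2 = r2 / (x.1^2 + x.2^2) := Real.sq_sqrt (by positivity)
      have hy : (lam • x).1^2 + (lam • x).2^2 = r2 := by
        simp only [Prod.smul_fst, Prod.smul_snd, smul_eq_mul]
        have : lam^2 * (x.1^2 + x.2^2) = r2 := by
          rw [hlamsq]
          field_simp
        nlinarith [this]
      have hyK : lam • x ∈ K' := hcircle _ hy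
      have hyK' : -(lam • x) ∈ K' := by
        apply hcircle
        simp only [Prod.fst_neg, Prod.snd_neg]
        nlinarith [hy]
      set μ := (1 + 1/lam)/2 with hμ
      have hμ1 : μ ≤ 1 := by
        rw [hμ]
        have : 1/lam ≤ 1 := by
          rw [div_le_one hlampos]
          exact hlam1
        linarith
      have hμ0 : 0 ≤ μ := by
        rw [hμ]
        have : 0 < 1/lam := by positivity
        linarith
      have hcomb := hconv hyK hyK' hμ0 (by linarith : (0:ℝ) ≤ 1 - μ) (by ring)
      have : μ • (lam • x) + (1 - μ) • (-(lam • x)) = x := by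
        have h1 : μ • (lam • x) + (1 - μ) • (-(lam • x)) = ((2*μ - 1)*lam) • x := by
          module
        rw [h1]
        have h2 : (2*μ - 1)*lam = 1 := by
          have hlne : lam ≠ 0 := ne_of_gt hlampos
          rw [hμ]
          field_simp
          ring
        rw [h2, one_smul]
      rwa [this] at hcomb

lemma frontier_disc {r2 : ℝ} (hr : 0 < r2) :
    frontier {x : ℝ×ℝ | x.1^2 + x.2^2 ≤ r2} = {x : ℝ×ℝ | x.1^2 + x.2^2 = r2} := by
  have hclosed : IsClosed {x : ℝ×ℝ | x.1^2 + x.2^2 ≤ r2} :=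
    isClosed_le (by fun_prop) continuous_const
  have hop : IsOpen {x : ℝ×ℝ | x.1^2 + x.2^2 < r2} :=
    isOpen_lt (by fun_prop) continuous_const
  have hnotint : ∀ x : ℝ×ℝ, x.1^2 + x.2^2 = r2 → x ∉ interior {x : ℝ×ℝ | x.1^2 + x.2^2 ≤ r2} := by
    intro x hx hmem
    obtain ⟨δ, hδ, hball⟩ := Metric.isOpen_iff.mp isOpen_interior x hmem
    have hxne : x ≠ 0 := by
      intro h
      rw [h] at hx
      simp only [Prod.fst_zero, Prod.snd_zero] at hx
      norm_num at hx
      linarith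
    have hnx : 0 < ‖x‖ := norm_pos_iff.mpr hxne
    set t := min (δ/(2*‖x‖)) 1 with htdef
    have htpos : 0 < t := by
      apply lt_min
      · positivity
      · norm_num
    have hy : (1+t)•x ∈ interior {x : ℝ×ℝ | x.1^2 + x.2^2 ≤ r2} := by
      apply hball
      rw [Metric.mem_ball, dist_eq_norm]
      have he : (1+t)•x - x = t•x := by module
      rw [he, norm_smul, Real.norm_eq_abs, abs_of_pos htpos]
      have h1 : t ≤ δ/(2*‖x‖) := min_le_left _ _
      have h2 : t*‖x‖ ≤ (δ/(2*‖x‖))*‖x‖ := mul_le_mul_of_nonneg_right h1 (norm_nonneg x)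
      have h3 : (δ/(2*‖x‖))*‖x‖ = δ/2 := by
        field_simp
      linarith
    have hy2' : (1+t)•x ∈ {x : ℝ×ℝ | x.1^2 + x.2^2 ≤ r2} := interior_subset hy
    have hy2 : ((1+t)•x).1^2 + ((1+t)•x).2^2 ≤ r2 := hy2'
    have hval : ((1+t)•x).1^2 + ((1+t)•x).2^2 = (1+t)^2*(x.1^2+x.2^2) := by
      simp only [Prod.smul_fst, Prod.smul_snd, smul_eq_mul]
      ring
    rw [hval, hx] at hy2
    have hcon : 0 < (2*t + t^2) * r2 := mul_pos (by nlinarith [htpos]) hr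
    nlinarith [hcon]
  rw [frontier, hclosed.closure_eq]
  ext x
  simp only [mem_diff, mem_setOf_eq]
  constructor
  · rintro ⟨h1, h2⟩
    rcases lt_or_eq_of_le h1 with h | h
    · refine absurd (interior_maximal ?_ hop h) h2
      intro y hy
      exact le_of_lt (show y.1^2 + y.2^2 < r2 from hy)
    · exact h
  · intro h
    exact ⟨le_of_eq h, hnotint x h⟩

theorem affine_symmetry_in_every_direction_ellipse (K : Set (ℝ × ℝ))
    (hK : IsCompact K) (hKconv : Convex ℝ K) (hKint : (0 : ℝ × ℝ) ∈ interior K)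
    (hsymm : K = -K)
    (hsym : ∀ u : ℝ × ℝ, u ≠ 0 →
      ∃ σ : ℝ × ℝ →ᵃ[ℝ] ℝ × ℝ,
        (∀ x, σ (σ x) = x) ∧
        (∃ x₀ w : ℝ × ℝ, w ≠ 0 ∧
          {x | σ x = x} = {x | ∃ t : ℝ, x = x₀ + t • w}) ∧
        σ '' K = K ∧
        (∀ x, ∃ t : ℝ, σ x = x + t • u)) :
    ∃ T : (ℝ × ℝ) ≃ₗ[ℝ] ℝ × ℝ,
      frontier K = T '' {p : ℝ × ℝ | p.1 ^ 2 + p.2 ^ 2 = 1} := by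
  have hK0 : (0:ℝ×ℝ) ∈ K := interior_subset hKint
  set ia := ∫ z in K, z.1^2 with hia
  set ib := ∫ z in K, z.1*z.2 with hib
  set ic := ∫ z in K, z.2^2 with hic
  have hiapos : 0 < ia := by
    have h := moment_pos hK hKint (v := ((1:ℝ),(0:ℝ))) (by
      intro h
      have := congrArg Prod.fst h
      norm_num at this)
    have h2 : ∫ z in K, (((1:ℝ),(0:ℝ)).1*z.1 + ((1:ℝ),(0:ℝ)).2*z.2)^2 = ia :=
      integral_congr_ae (Filter.Eventually.of_forall (fun z => by norm_num))
    rwa [h2] at h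
  have hicpos : 0 < ic := by
    have h := moment_pos hK hKint (v := ((0:ℝ),(1:ℝ))) (by
      intro h
      have := congrArg Prod.snd h
      norm_num at this)
    have h2 : ∫ z in K, (((0:ℝ),(1:ℝ)).1*z.1 + ((0:ℝ),(1:ℝ)).2*z.2)^2 = ic :=
      integral_congr_ae (Filter.Eventually.of_forall (fun z => by norm_num))
    rwa [h2] at h
  have hΔpos : 0 < ia*ic - ib^2 := by
    by_contra hcon
    push_neg at hcon
    set t := -ib/ia with ht
    have h := moment_pos hK hKint (v := (t,(1:ℝ))) (by
      intro h
      have := congrArg Prod.snd h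
      norm_num at this)
    have h2 : ∫ z in K, ((t,(1:ℝ)).1*z.1 + (t,(1:ℝ)).2*z.2)^2 = t^2*ia + 2*t*ib + ic := by
      have h3 : ∫ z in K, ((t,(1:ℝ)).1*z.1 + (t,(1:ℝ)).2*z.2)^2
          = ∫ z in K, (t*z.1 + 1*z.2)*(t*z.1 + 1*z.2) :=
        integral_congr_ae (Filter.Eventually.of_forall (fun z => by norm_num; ring))
      rw [h3, expand_bilin hK]
      ring
    rw [h2] at h
    have hval : t^2*ia + 2*t*ib + ic = (ia*ic - ib^2)/ia := by
      rw [ht]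
      field_simp
      ring
    rw [hval] at h
    rcases div_pos_iff.mp h with ⟨h1, _⟩ | ⟨_, h2⟩
    · linarith
    · linarith
  set e := Real.sqrt (ia*ic - ib^2) with he
  have hepos : 0 < e := Real.sqrt_pos.mpr hΔpos
  have hene : e ≠ 0 := ne_of_gt hepos
  have he2 : e^2 = ia*ic - ib^2 := Real.sq_sqrt (le_of_lt hΔpos)
  have hdet : (1:ℝ)*(ic/e) - (ib/e)*0 ≠ 0 := by
    simp only [one_mul, mul_zero, sub_zero]
    exact div_ne_zero (ne_of_gt hicpos) hene
  set T₀ := lemk 1 (ib/e) 0 (ic/e) hdet with hT₀def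
  set K' := ⇑T₀.symm '' K with hK'def
  have hcontsymm : Continuous ⇑T₀.symm := T₀.symm.toLinearMap.continuous_of_finiteDimensional
  have hcont : Continuous ⇑T₀ := T₀.toLinearMap.continuous_of_finiteDimensional
  have hK'comp : IsCompact K' := hK.image hcontsymm
  have hK'conv : Convex ℝ K' := hKconv.linear_image T₀.symm.toLinearMap
  have hK'ne0 : ∃ x ∈ K', x ≠ 0 := by
    obtain ⟨ε, hε, hball⟩ := Metric.mem_nhds_iff.mp (mem_interior_iff_mem_nhds.mp hKint)
    have hpt : ((ε/2 : ℝ), (0:ℝ)) ∈ K := by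
      apply hball
      rw [Metric.mem_ball, dist_zero_right, Prod.norm_def]
      simp only [Real.norm_eq_abs]
      rw [abs_of_pos (half_pos hε)]
      rw [abs_of_nonneg (le_refl (0:ℝ))]
      rw [max_eq_left (le_of_lt (half_pos hε))]
      linarith
    refine ⟨T₀.symm (ε/2, 0), mem_image_of_mem _ hpt, ?_⟩
    intro h
    have h2 := congrArg ⇑T₀ h
    rw [LinearEquiv.apply_symm_apply, map_zero] at h2
    have := congrArg Prod.fst h2
    norm_num at this
    linarith
  have hrefl : ∀ v : ℝ×ℝ, v ≠ 0 →
      (lmk ((v.2^2-v.1^2)/(v.1^2+v.2^2)) (-2*v.1*v.2/(v.1^2+v.2^2))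
        (-2*v.1*v.2/(v.1^2+v.2^2)) (-((v.2^2-v.1^2)/(v.1^2+v.2^2)))) '' K' = K' := by
    intro v hv
    have hu : T₀ v ≠ 0 := by
      intro h
      apply hv
      have := congrArg ⇑T₀.symm h
      rwa [LinearEquiv.symm_apply_apply, map_zero] at this
    obtain ⟨σ, hinv, hfix, hσK, hdir⟩ := hsym (T₀ v) hu
    obtain ⟨p, q, s, hpqs, hRu, hRK, w, hwne, hRw⟩ :=
      step1 hK hK0 hsymm hu σ hinv hfix hσK hdir
    set R := lmk p q s (-p) with hRdef
    have hRR : ∀ x, R (R x) = x := lmk_invol hpqs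
    have hm := moms hK hpqs hRK
    have hBinv : ∀ x y, Bform ia ib ic (R x) (R y) = Bform ia ib ic x y :=
      fun x y => binv_alg hm.1 hm.2.1 hm.2.2 x y
    have key := std_reflection ia ib ic (ne_of_gt hicpos) e hene he2 hdet R hRR hBinv hv hRu
      ⟨w, hwne, hRw⟩
    have hpt : ∀ x, (lmk ((v.2^2-v.1^2)/(v.1^2+v.2^2)) (-2*v.1*v.2/(v.1^2+v.2^2))
        (-2*v.1*v.2/(v.1^2+v.2^2)) (-((v.2^2-v.1^2)/(v.1^2+v.2^2)))) (T₀.symm x)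
        = T₀.symm (R x) := by
      intro x
      have h1 := key (T₀.symm x)
      rw [LinearEquiv.apply_symm_apply] at h1
      have h2 := congrArg ⇑T₀.symm h1
      rwa [LinearEquiv.symm_apply_apply] at h2
    rw [hK'def, ← image_comp]
    have : (⇑(lmk ((v.2^2-v.1^2)/(v.1^2+v.2^2)) (-2*v.1*v.2/(v.1^2+v.2^2))
        (-2*v.1*v.2/(v.1^2+v.2^2)) (-((v.2^2-v.1^2)/(v.1^2+v.2^2)))) ∘ ⇑T₀.symm)
        = ⇑T₀.symm ∘ ⇑R := funext hpt
    rw [this, image_comp, hRK]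
  have hrot := rot_image hrefl
  obtain ⟨r2, hr2pos, hK'eq⟩ := rot_ball hK'comp hK'conv hK'ne0 hrot
  have hfr' : frontier K' = {x : ℝ×ℝ | x.1^2 + x.2^2 = r2} := by
    rw [hK'eq]
    exact frontier_disc hr2pos
  set r := Real.sqrt r2 with hrdef
  have hrpos : 0 < r := Real.sqrt_pos.mpr hr2pos
  have hrsq : r^2 = r2 := Real.sq_sqrt (le_of_lt hr2pos)
  have hdet2 : r*r - (0:ℝ)*0 ≠ 0 := by
    simp only [mul_zero, sub_zero]
    positivity
  refine ⟨(lemk r 0 0 r hdet2).trans T₀, ?_⟩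
  have hT₀K : ⇑T₀ '' K' = K := by
    rw [hK'def, ← image_comp]
    have : ⇑T₀ ∘ ⇑T₀.symm = id := funext (fun x => T₀.apply_symm_apply x)
    rw [this, image_id]
  have hhomeo : frontier K = ⇑T₀ '' frontier K' := by
    have h := T₀.toContinuousLinearEquiv.toHomeomorph.image_frontier K'
    have hcoe : ⇑T₀.toContinuousLinearEquiv.toHomeomorph = ⇑T₀ := rfl
    rw [hcoe] at h
    rw [← hT₀K, ← h]
  rw [hhomeo, hfr']
  have hcirc : {x : ℝ×ℝ | x.1^2 + x.2^2 = r2}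
      = ⇑(lemk r 0 0 r hdet2) '' {p : ℝ×ℝ | p.1^2 + p.2^2 = 1} := by
    ext x
    simp only [mem_setOf_eq, mem_image, lemk_apply]
    constructor
    · intro hx
      refine ⟨(x.1/r, x.2/r), ?_, ?_⟩
      · show (x.1/r)^2 + (x.2/r)^2 = 1
        have hrne : r ≠ 0 := ne_of_gt hrpos
        field_simp
        linear_combination hx - hrsq
      · have hrne : r ≠ 0 := ne_of_gt hrpos
        ext
        · show r*(x.1/r) + 0*(x.2/r) = x.1
          field_simp
          ring
        · show 0*(x.1/r) + r*(x.2/r) = x.2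
          field_simp
          ring
    · rintro ⟨p, hp, rfl⟩
      show (r*p.1 + 0*p.2)^2 + (0*p.1 + r*p.2)^2 = r2
      linear_combination (r^2)*hp + hrsq
  rw [hcirc, ← image_comp]
  rfl
end
end
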